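/- arXiv:1108.6103 — 2 statements merged into one kernel-verified Lean document; each statement's English description precedes it below -/
import Mathlib

section
/- Let A ∈ ℂ^{m×N} have restricted isometry constant of order 2s satisfying δ_{2s} < √2 − 1. Let X ∈ ℂ^N, let E ∈ ℂ^m with ‖E‖_2 ≤ ε, and set Y = AX + E. Let X̃ be any minimizer of ‖Z‖_1 over all Z ∈ ℂ^N with ‖Y − AZ‖_2 ≤ ε. Then there exist constants C₀, C₁ > 0 depending only on δ_{2s} (in particular, independent of X) such that ‖X̃ − X‖_2 ≤ C₀ s^{-1/2} ‖X_s − X‖_1 + C₁ ε and ‖X̃ − X‖_1 ≤ C₀ ‖X_s − X‖_1 + C₁ ε, where X_s denotes a best s-term approximation of X (a vector supported on s indices carrying the s largest-magnitude entries of X). -/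
open Complex Real

noncomputable section

/-- Number of nonzero entries at most `s`. -/
def Sparse {N : ℕ} (s : ℕ) (Z : Fin N → ℂ) : Prop :=
  (Finset.univ.filter fun n => Z n ≠ 0).card ≤ s

/-- Euclidean (ℓ²) norm of a complex vector. -/
def l2norm {d : ℕ} (Z : Fin d → ℂ) : ℝ := Real.sqrt (∑ n, ‖Z n‖ ^ 2)

/-- ℓ¹ norm of a complex vector. -/
def l1norm {d : ℕ} (Z : Fin d → ℂ) : ℝ := ∑ n, ‖Z n‖

/-- `A` satisfies the restricted isometry property of order `s` with constant `δ`. -/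
def IsRIP {m N : ℕ} (A : Matrix (Fin m) (Fin N) ℂ) (s : ℕ) (δ : ℝ) : Prop :=
  ∀ Z : Fin N → ℂ, Sparse s Z →
    (1 - δ) * (l2norm Z) ^ 2 ≤ (l2norm (A.mulVec Z)) ^ 2 ∧
      (l2norm (A.mulVec Z)) ^ 2 ≤ (1 + δ) * (l2norm Z) ^ 2

/-- The restricted isometry constant of order `s`: the smallest nonnegative `δ`
satisfying the restricted isometry property. -/
def ric {m N : ℕ} (A : Matrix (Fin m) (Fin N) ℂ) (s : ℕ) : ℝ :=
  sInf {δ : ℝ | 0 ≤ δ ∧ IsRIP A s δ}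

/-- `Xs` is a best `s`-term approximation of `X`: it is supported on a set `T` of `s`
indices carrying the `s` largest-magnitude entries of `X`, where it agrees with `X`. -/
def IsBestApprox {N : ℕ} (s : ℕ) (X Xs : Fin N → ℂ) : Prop :=
  ∃ T : Finset (Fin N), T.card = s ∧
    (∀ n, Xs n = if n ∈ T then X n else 0) ∧
    ∀ i ∈ T, ∀ j ∉ T, ‖X j‖ ≤ ‖X i‖

/-- `X̃` is a solution of the Basis Pursuit problem
`min ‖Z‖₁ subject to ‖Y - A Z‖₂ ≤ ε`. -/
def IsBPSol {m N : ℕ} (A : Matrix (Fin m) (Fin N) ℂ) (Y : Fin m → ℂ) (ε : ℝ)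
    (Xt : Fin N → ℂ) : Prop :=
  l2norm (Y - A.mulVec Xt) ≤ ε ∧
    ∀ Z : Fin N → ℂ, l2norm (Y - A.mulVec Z) ≤ ε → l1norm Xt ≤ l1norm Z


-- ===== auxiliary machinery =====

namespace BPStability

def toE {d : ℕ} (v : Fin d → ℂ) : EuclideanSpace ℂ (Fin d) := (WithLp.equiv 2 _).symm v

lemma toE_add {d : ℕ} (u v : Fin d → ℂ) : toE (u + v) = toE u + toE v := rfl
lemma toE_sub {d : ℕ} (u v : Fin d → ℂ) : toE (u - v) = toE u - toE v := rfl
lemma toE_smul {d : ℕ} (c : ℂ) (v : Fin d → ℂ) : toE (c • v) = c • toE v := rfl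
lemma toE_sum {d : ℕ} {ι : Type*} (S : Finset ι) (f : ι → Fin d → ℂ) :
    toE (∑ j ∈ S, f j) = ∑ j ∈ S, toE (f j) := by
  classical
  induction S using Finset.induction_on with
  | empty => rfl
  | @insert _ _ h ih => rw [Finset.sum_insert h, Finset.sum_insert h, toE_add, ih]

lemma l2norm_eq {d : ℕ} (v : Fin d → ℂ) : l2norm v = ‖toE v‖ := by
  rw [EuclideanSpace.norm_eq]; rfl

lemma l2norm_nonneg' {d : ℕ} (v : Fin d → ℂ) : 0 ≤ l2norm v := Real.sqrt_nonneg _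

lemma l1norm_nonneg' {d : ℕ} (v : Fin d → ℂ) : 0 ≤ l1norm v :=
  Finset.sum_nonneg fun _ _ => norm_nonneg _

lemma sq_l2norm' {d : ℕ} (v : Fin d → ℂ) : l2norm v ^ 2 = ∑ n, ‖v n‖ ^ 2 :=
  Real.sq_sqrt (Finset.sum_nonneg fun _ _ => sq_nonneg _)

lemma l2norm_sq_nonneg {d : ℕ} (v : Fin d → ℂ) : 0 ≤ l2norm v ^ 2 := sq_nonneg _

lemma l2norm_eq_zero_iff {d : ℕ} (v : Fin d → ℂ) : l2norm v ^ 2 = 0 ↔ v = 0 := by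
  rw [sq_l2norm']
  rw [Finset.sum_eq_zero_iff_of_nonneg (fun n _ => sq_nonneg _)]
  constructor
  · intro hv; funext n
    have := hv n (Finset.mem_univ n)
    simpa using this
  · intro hv n _
    rw [hv]; simp

/-- restriction of a vector to a finset -/
def rst {d : ℕ} (S : Finset (Fin d)) (v : Fin d → ℂ) : Fin d → ℂ :=
  fun n => if n ∈ S then v n else 0

lemma rst_sparse {d : ℕ} {S : Finset (Fin d)} {s : ℕ} (h : S.card ≤ s) (v : Fin d → ℂ) :
    Sparse s (rst S v) := by
  refine le_trans (Finset.card_le_card ?_) h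
  intro n hn
  rw [Finset.mem_filter] at hn
  simp only [rst] at hn
  by_contra hS
  exact hn.2 (if_neg hS)

lemma sq_l2norm_rst {d : ℕ} (S : Finset (Fin d)) (v : Fin d → ℂ) :
    l2norm (rst S v) ^ 2 = ∑ n ∈ S, ‖v n‖ ^ 2 := by
  rw [l2norm, Real.sq_sqrt (Finset.sum_nonneg fun _ _ => sq_nonneg _)]
  rw [← Finset.sum_filter_add_sum_filter_not Finset.univ (· ∈ S)]
  have h1 : ∑ n ∈ Finset.univ.filter (· ∈ S), ‖rst S v n‖ ^ 2 = ∑ n ∈ S, ‖v n‖ ^ 2 := by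
    rw [Finset.filter_mem_eq_inter, Finset.univ_inter]
    exact Finset.sum_congr rfl fun n hn => by rw [rst, if_pos hn]
  have h2 : ∑ n ∈ Finset.univ.filter (¬ · ∈ S), ‖rst S v n‖ ^ 2 = 0 := by
    refine Finset.sum_eq_zero fun n hn => ?_
    simp only [Finset.mem_filter] at hn
    rw [rst, if_neg hn.2]; simp
  rw [h1, h2, add_zero]

lemma l1norm_rst {d : ℕ} (S : Finset (Fin d)) (v : Fin d → ℂ) :
    l1norm (rst S v) = ∑ n ∈ S, ‖v n‖ := by
  rw [l1norm, ← Finset.sum_filter_add_sum_filter_not Finset.univ (· ∈ S)]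
  have h1 : ∑ n ∈ Finset.univ.filter (· ∈ S), ‖rst S v n‖ = ∑ n ∈ S, ‖v n‖ := by
    rw [Finset.filter_mem_eq_inter, Finset.univ_inter]
    exact Finset.sum_congr rfl fun n hn => by rw [rst, if_pos hn]
  have h2 : ∑ n ∈ Finset.univ.filter (¬ · ∈ S), ‖rst S v n‖ = 0 := by
    refine Finset.sum_eq_zero fun n hn => ?_
    simp only [Finset.mem_filter] at hn
    rw [rst, if_neg hn.2]; simp
  rw [h1, h2, add_zero]

lemma l1_rst_le {d : ℕ} (S : Finset (Fin d)) (v : Fin d → ℂ) :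
    l1norm (rst S v) ≤ Real.sqrt S.card * l2norm (rst S v) := by
  have h := sq_sum_le_card_mul_sum_sq (s := S) (f := fun n => ‖v n‖)
  have h0 : (0:ℝ) ≤ ∑ n ∈ S, ‖v n‖ := Finset.sum_nonneg fun _ _ => norm_nonneg _
  rw [l1norm_rst]
  have h2 := Real.sqrt_le_sqrt h
  rw [Real.sqrt_sq h0] at h2
  refine h2.trans ?_
  rw [Real.sqrt_mul (by positivity)]
  rw [l2norm]
  have h3 : Real.sqrt (∑ n ∈ S, ‖v n‖ ^ 2) = Real.sqrt (∑ n, ‖rst S v n‖ ^ 2) := by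
    congr 1
    rw [show (∑ n ∈ S, ‖v n‖ ^ 2) = l2norm (rst S v) ^2 from (sq_l2norm_rst S v).symm]
    rw [l2norm, Real.sq_sqrt (Finset.sum_nonneg fun _ _ => sq_nonneg _)]
  rw [h3]

lemma sparse_add {N s₁ s₂ : ℕ} {u v : Fin N → ℂ} (hu : Sparse s₁ u) (hv : Sparse s₂ v) :
    Sparse (s₁ + s₂) (u + v) := by
  classical
  refine le_trans (le_trans (Finset.card_le_card ?_) (Finset.card_union_le _ _)) (add_le_add hu hv)
  intro n hn
  simp only [Finset.mem_filter, Finset.mem_union, Pi.add_apply] at hn ⊢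
  rcases eq_or_ne (u n) 0 with h | h
  · rcases eq_or_ne (v n) 0 with h' | h'
    · exact absurd (by rw [h, h', add_zero]) hn.2
    · exact Or.inr ⟨Finset.mem_univ n, h'⟩
  · exact Or.inl ⟨Finset.mem_univ n, h⟩

lemma sparse_smul {N s : ℕ} (c : ℂ) {u : Fin N → ℂ} (hu : Sparse s u) : Sparse s (c • u) := by
  refine le_trans (Finset.card_le_card ?_) hu
  intro n hn
  simp only [Finset.mem_filter, Pi.smul_apply, smul_eq_mul] at hn ⊢
  exact ⟨hn.1, fun h => hn.2 (by rw [h, mul_zero])⟩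

lemma sparse_neg {N s : ℕ} {u : Fin N → ℂ} (hu : Sparse s u) : Sparse s (-u) := by
  refine le_trans (Finset.card_le_card ?_) hu
  intro n hn
  simp only [Finset.mem_filter, Pi.neg_apply, neg_ne_zero] at hn ⊢
  exact hn

lemma sparse_sub {N s₁ s₂ : ℕ} {u v : Fin N → ℂ} (hu : Sparse s₁ u) (hv : Sparse s₂ v) :
    Sparse (s₁ + s₂) (u - v) := by
  have := sparse_add hu (sparse_neg hv)
  rwa [sub_eq_add_neg]

lemma sq_l2norm_add_disjoint {N : ℕ} {u v : Fin N → ℂ} (hd : ∀ n, u n = 0 ∨ v n = 0) :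
    l2norm (u + v) ^ 2 = l2norm u ^ 2 + l2norm v ^ 2 := by
  rw [sq_l2norm', sq_l2norm', sq_l2norm', ← Finset.sum_add_distrib]
  refine Finset.sum_congr rfl fun n _ => ?_
  rcases hd n with h | h <;> simp [h]

lemma sq_l2norm_sub_disjoint {N : ℕ} {u v : Fin N → ℂ} (hd : ∀ n, u n = 0 ∨ v n = 0) :
    l2norm (u - v) ^ 2 = l2norm u ^ 2 + l2norm v ^ 2 := by
  have hd' : ∀ n, u n = 0 ∨ (-v) n = 0 := fun n => by
    rcases hd n with h | h
    · exact Or.inl h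
    · exact Or.inr (by simp [h])
  have := sq_l2norm_add_disjoint hd'
  rw [sub_eq_add_neg, this]
  congr 1
  rw [sq_l2norm', sq_l2norm']
  simp

lemma ric_spec {m N : ℕ} (A : Matrix (Fin m) (Fin N) ℂ) (s : ℕ) :
    0 ≤ ric A s ∧ IsRIP A s (ric A s) := by
  classical
  set S : Set ℝ := {δ : ℝ | 0 ≤ δ ∧ IsRIP A s δ} with hS
  set F : ℝ := ∑ i, ∑ j, ‖A i j‖ ^ 2 with hFdef
  have hF0 : 0 ≤ F := Finset.sum_nonneg fun _ _ => Finset.sum_nonneg fun _ _ => sq_nonneg _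
  have hmem : max 1 F ∈ S := by
    constructor
    · exact le_trans zero_le_one (le_max_left _ _)
    · intro Z _
      constructor
      · have h0 : (1 - max 1 F) ≤ 0 := by
          have := le_max_left 1 F; linarith
        calc (1 - max 1 F) * l2norm Z ^ 2 ≤ 0 :=
              mul_nonpos_of_nonpos_of_nonneg h0 (l2norm_sq_nonneg Z)
          _ ≤ _ := l2norm_sq_nonneg _
      · have hb : l2norm (A.mulVec Z) ^ 2 ≤ F * l2norm Z ^ 2 := by
          rw [sq_l2norm', sq_l2norm', hFdef, Finset.sum_mul]
          apply Finset.sum_le_sum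
          intro i _
          calc ‖A.mulVec Z i‖ ^ 2 ≤ (∑ j, ‖A i j‖ * ‖Z j‖) ^ 2 := by
                apply sq_le_sq'
                · have h1 : (0:ℝ) ≤ ∑ j, ‖A i j‖ * ‖Z j‖ :=
                    Finset.sum_nonneg fun _ _ => mul_nonneg (norm_nonneg _) (norm_nonneg _)
                  have h2 : (0:ℝ) ≤ ‖A.mulVec Z i‖ := norm_nonneg _
                  linarith
                · calc ‖A.mulVec Z i‖ = ‖∑ j, A i j * Z j‖ := rfl
                    _ ≤ ∑ j, ‖A i j * Z j‖ := norm_sum_le _ _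
                    _ = ∑ j, ‖A i j‖ * ‖Z j‖ := by simp [norm_mul]
            _ ≤ (∑ j, ‖A i j‖ ^ 2) * ∑ j, ‖Z j‖ ^ 2 :=
                Finset.sum_mul_sq_le_sq_mul_sq Finset.univ _ _
        calc l2norm (A.mulVec Z) ^ 2 ≤ F * l2norm Z ^ 2 := hb
          _ ≤ (1 + max 1 F) * l2norm Z ^ 2 := by
              apply mul_le_mul_of_nonneg_right _ (l2norm_sq_nonneg _)
              have := le_max_right 1 F; linarith
  have hne : S.Nonempty := ⟨_, hmem⟩
  have hR0 : 0 ≤ ric A s := le_csInf hne fun b hb => hb.1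
  refine ⟨hR0, ?_⟩
  intro Z hZ
  by_cases ha : l2norm Z ^ 2 = 0
  · have hZ0 : Z = 0 := (l2norm_eq_zero_iff Z).mp ha
    subst hZ0
    have h0 : A.mulVec 0 = 0 := Matrix.mulVec_zero A
    rw [h0, ha]
    rw [show l2norm (0 : Fin m → ℂ) ^ 2 = 0 from (l2norm_eq_zero_iff _).mpr rfl]
    simp
  · have hapos : 0 < l2norm Z ^ 2 := lt_of_le_of_ne (l2norm_sq_nonneg Z) (Ne.symm ha)
    set a := l2norm Z ^ 2
    set b := l2norm (A.mulVec Z) ^ 2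
    constructor
    · have h6 : (a - b) / a ≤ ric A s := by
        apply le_csInf hne
        intro δ hδ
        have h2 := (hδ.2 Z hZ).1
        change (1 - δ) * a ≤ b at h2
        rw [div_le_iff₀ hapos]
        linarith
      rw [div_le_iff₀ hapos] at h6
      linarith
    · have h6 : (b - a) / a ≤ ric A s := by
        apply le_csInf hne
        intro δ hδ
        have h2 := (hδ.2 Z hZ).2
        change b ≤ (1 + δ) * a at h2
        rw [div_le_iff₀ hapos]
        linarith
      rw [div_le_iff₀ hapos] at h6
      linarith

section RO
variable {m N s : ℕ} {A : Matrix (Fin m) (Fin N) ℂ} {δ : ℝ}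

lemma ro_re (hRIP : IsRIP A (2 * s) δ) {u v : Fin N → ℂ}
    (hu : Sparse s u) (hv : Sparse s v) (hd : ∀ n, u n = 0 ∨ v n = 0) :
    ((inner ℂ (toE (A.mulVec u)) (toE (A.mulVec v)) : ℂ)).re ≤
      δ / 2 * (l2norm u ^ 2 + l2norm v ^ 2) := by
  have h1 := @norm_add_sq ℂ _ _ _ _ (toE (A.mulVec u)) (toE (A.mulVec v))
  have h2 := @norm_sub_sq ℂ _ _ _ _ (toE (A.mulVec u)) (toE (A.mulVec v))
  have hre : (RCLike.re (inner ℂ (toE (A.mulVec u)) (toE (A.mulVec v)) : ℂ) : ℝ)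
      = ((inner ℂ (toE (A.mulVec u)) (toE (A.mulVec v)) : ℂ)).re := rfl
  have hxy : ‖toE (A.mulVec u) + toE (A.mulVec v)‖ ^ 2 = l2norm (A.mulVec (u + v)) ^ 2 := by
    rw [Matrix.mulVec_add, l2norm_eq, toE_add]
  have hxy' : ‖toE (A.mulVec u) - toE (A.mulVec v)‖ ^ 2 = l2norm (A.mulVec (u - v)) ^ 2 := by
    rw [Matrix.mulVec_sub, l2norm_eq, toE_sub]
  have hsadd : Sparse (2 * s) (u + v) := by rw [two_mul]; exact sparse_add hu hv
  have hssub : Sparse (2 * s) (u - v) := by rw [two_mul]; exact sparse_sub hu hv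
  have hup := (hRIP _ hsadd).2
  have hlo := (hRIP _ hssub).1
  rw [sq_l2norm_add_disjoint hd] at hup
  rw [sq_l2norm_sub_disjoint hd] at hlo
  rw [hxy] at h1
  rw [hxy'] at h2
  rw [hre] at h1 h2
  linarith [hup, hlo, h1, h2]

lemma ro_norm (hδ0 : 0 ≤ δ) (hRIP : IsRIP A (2 * s) δ) {u v : Fin N → ℂ}
    (hu : Sparse s u) (hv : Sparse s v) (hd : ∀ n, u n = 0 ∨ v n = 0) :
    ‖(inner ℂ (toE (A.mulVec u)) (toE (A.mulVec v)) : ℂ)‖ ≤ δ * l2norm u * l2norm v := by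
  set c : ℂ := inner ℂ (toE (A.mulVec u)) (toE (A.mulVec v)) with hc
  by_cases hc0 : c = 0
  · rw [hc0]
    simp only [norm_zero]
    exact mul_nonneg (mul_nonneg hδ0 (l2norm_nonneg' u)) (l2norm_nonneg' v)
  by_cases hu0 : l2norm u = 0
  · exfalso
    have h4 : u = 0 := by
      have h5 := sq_l2norm' u
      rw [hu0] at h5
      simp only [zero_pow, OfNat.ofNat_ne_zero, ne_eq, not_false_eq_true] at h5
      have h0 := Finset.sum_eq_zero_iff_of_nonneg (fun n _ => sq_nonneg ‖u n‖) |>.mp h5.symm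
      funext n
      have := h0 n (Finset.mem_univ n)
      simpa using this
    apply hc0
    rw [hc, h4]
    have h5 : A.mulVec (0 : Fin N → ℂ) = 0 := Matrix.mulVec_zero A
    rw [h5]
    have h6 : toE (0 : Fin m → ℂ) = 0 := rfl
    rw [h6, inner_zero_left]
  by_cases hv0 : l2norm v = 0
  · exfalso
    have h4 : v = 0 := by
      have h5 := sq_l2norm' v
      rw [hv0] at h5
      simp only [zero_pow, OfNat.ofNat_ne_zero, ne_eq, not_false_eq_true] at h5
      have h0 := Finset.sum_eq_zero_iff_of_nonneg (fun n _ => sq_nonneg ‖v n‖) |>.mp h5.symm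
      funext n
      have := h0 n (Finset.mem_univ n)
      simpa using this
    apply hc0
    rw [hc, h4]
    have h5 : A.mulVec (0 : Fin N → ℂ) = 0 := Matrix.mulVec_zero A
    rw [h5]
    have h6 : toE (0 : Fin m → ℂ) = 0 := rfl
    rw [h6, inner_zero_right]
  have hup : 0 < l2norm u := lt_of_le_of_ne (l2norm_nonneg' u) (Ne.symm hu0)
  have hvp : 0 < l2norm v := lt_of_le_of_ne (l2norm_nonneg' v) (Ne.symm hv0)
  set a := l2norm u
  set b := l2norm v
  set t : ℝ := Real.sqrt (b / a) with ht
  have htp : 0 < t := Real.sqrt_pos.mpr (div_pos hvp hup)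
  set lam : ℂ := (c / ‖c‖) * (t : ℂ) with hlam
  set u' := lam • u with hu'
  set v' := ((t : ℂ)⁻¹) • v with hv'
  have hcnorm : (0:ℝ) < ‖c‖ := norm_pos_iff.mpr hc0
  have hcrne : ((‖c‖:ℝ):ℂ) ≠ 0 := by exact_mod_cast hcnorm.ne'
  have htcne : ((t:ℝ):ℂ) ≠ 0 := by exact_mod_cast htp.ne'
  have hnormlam : ‖lam‖ = t := by
    rw [hlam, norm_mul, norm_div, Complex.norm_real, Complex.norm_real]
    rw [Real.norm_eq_abs, Real.norm_eq_abs, abs_of_pos hcnorm, abs_of_pos htp]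
    rw [mul_comm, div_self (ne_of_gt hcnorm), mul_one]
  have hsu' : Sparse s u' := sparse_smul _ hu
  have hsv' : Sparse s v' := sparse_smul _ hv
  have hd' : ∀ n, u' n = 0 ∨ v' n = 0 := fun n => by
    rcases hd n with h | h
    · exact Or.inl (by simp [hu', h])
    · exact Or.inr (by simp [hv', h])
  have hkey := ro_re hRIP hsu' hsv' hd'
  have hmulu : A.mulVec u' = lam • A.mulVec u := by
    rw [hu']; exact A.mulVec_smul _ _
  have hmulv : A.mulVec v' = ((t:ℂ)⁻¹) • A.mulVec v := by
    rw [hv']; exact A.mulVec_smul _ _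
  have hconjc : (starRingEnd ℂ) c * c = (((‖c‖:ℝ)^2 : ℝ) : ℂ) := by
    rw [mul_comm, Complex.mul_conj]
    norm_cast
    rw [Complex.normSq_eq_norm_sq]
  have hinner : (inner ℂ (toE (A.mulVec u')) (toE (A.mulVec v')) : ℂ)
      = (starRingEnd ℂ) lam * ((t : ℂ)⁻¹) * c := by
    rw [hmulu, hmulv, toE_smul, toE_smul, inner_smul_left, inner_smul_right, ← hc]
    ring
  have hval : (starRingEnd ℂ) lam * ((t : ℂ)⁻¹) * c = ((‖c‖:ℝ) : ℂ) := by
    rw [hlam, map_mul, map_div₀, Complex.conj_ofReal, Complex.conj_ofReal]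
    have h5 : (starRingEnd ℂ) c / ((‖c‖:ℝ):ℂ) * (t:ℂ) * ((t:ℂ))⁻¹ * c
        = ((starRingEnd ℂ) c * c) / ((‖c‖:ℝ):ℂ) := by
      rw [mul_assoc ((starRingEnd ℂ) c / ((‖c‖:ℝ):ℂ)) (t:ℂ) ((t:ℂ))⁻¹,
        mul_inv_cancel₀ htcne, mul_one, div_mul_eq_mul_div]
    rw [h5, hconjc]
    push_cast
    rw [sq, mul_div_assoc, div_self hcrne, mul_one]
  have hlhs : ((inner ℂ (toE (A.mulVec u')) (toE (A.mulVec v')) : ℂ)).re = ‖c‖ := by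
    rw [hinner, hval, Complex.ofReal_re]
  have hlu' : l2norm u' = t * a := by
    rw [hu', l2norm_eq, toE_smul, norm_smul, hnormlam, ← l2norm_eq]
  have hlv' : l2norm v' = t⁻¹ * b := by
    rw [hv', l2norm_eq, toE_smul, norm_smul, ← l2norm_eq]
    congr 1
    rw [norm_inv, Complex.norm_real, Real.norm_eq_abs, abs_of_pos htp]
  have ht2 : t ^ 2 = b / a := Real.sq_sqrt (le_of_lt (div_pos hvp hup))
  have hsum : l2norm u' ^ 2 + l2norm v' ^ 2 = 2 * (a * b) := by
    rw [hlu', hlv', mul_pow, mul_pow, ht2, inv_pow, ht2]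
    field_simp
    ring
  rw [hlhs, hsum] at hkey
  calc ‖c‖ ≤ δ / 2 * (2 * (a * b)) := hkey
    _ = δ * a * b := by ring
end RO

lemma exists_blocks {N s : ℕ} (hs : 0 < s) (h : Fin N → ℂ) (T₀ : Finset (Fin N)) :
    ∃ C : ℕ → Finset (Fin N),
      (∀ j, C j ⊆ T₀ᶜ) ∧
      (∀ j, (C j).card ≤ s) ∧
      (∀ j k, j ≠ k → Disjoint (C j) (C k)) ∧
      (∀ (α : Type) [AddCommMonoid α], ∀ f : Fin N → α,
        ∑ j ∈ Finset.range (N+1), ∑ n ∈ C j, f n = ∑ n ∈ T₀ᶜ, f n) ∧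
      (∀ j, ∀ n ∈ C (j+1), (s:ℝ) * ‖h n‖ ≤ ∑ n' ∈ C j, ‖h n'‖) := by
  classical
  set Tc := T₀ᶜ with hTc
  set M := Tc.card with hM
  set e := Tc.orderIsoOfFin (rfl : Tc.card = M) with he
  set σ := Tuple.sort (fun i : Fin M => -‖h ((e i : Fin N))‖) with hσ
  set g : Fin M → Fin N := fun i => (e (σ i) : Fin N) with hg
  have hginj : Function.Injective g := fun a b hab => by
    apply σ.injective
    apply Subtype.coe_injective at hab
    exact e.injective hab
  have hgmem : ∀ i, g i ∈ Tc := fun i => (e (σ i)).2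
  have hmono : ∀ i i' : Fin M, i ≤ i' → ‖h (g i')‖ ≤ ‖h (g i)‖ := by
    intro i i' hii
    have := Tuple.monotone_sort (fun i : Fin M => -‖h ((e i : Fin N))‖) hii
    simpa [hg] using this
  have hgimg : Finset.univ.image g = Tc := by
    apply Finset.eq_of_subset_of_card_le
    · intro n hn
      simp only [Finset.mem_image] at hn
      obtain ⟨i, _, rfl⟩ := hn
      exact hgmem i
    · rw [Finset.card_image_of_injective _ hginj, Finset.card_univ, Fintype.card_fin]
  set F : ℕ → Finset (Fin M) := fun j => Finset.univ.filter (fun i : Fin M => (i : ℕ) / s = j)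
    with hF
  have hFub : ∀ j (i : Fin M), i ∈ F j → (i:ℕ) < j * s + s := by
    intro j i hi
    simp only [hF, Finset.mem_filter] at hi
    have h1 : (i:ℕ) = s * j + (i:ℕ) % s := by
      conv_lhs => rw [← Nat.div_add_mod (i:ℕ) s]
      rw [hi.2]
    have h2 : (i:ℕ) % s < s := Nat.mod_lt _ hs
    rw [h1, mul_comm]
    omega
  have hFlb : ∀ j (i : Fin M), i ∈ F j → j * s ≤ (i:ℕ) := by
    intro j i hi
    simp only [hF, Finset.mem_filter] at hi
    rw [← hi.2]
    exact Nat.div_mul_le_self _ _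
  refine ⟨fun j => (F j).image g, ?_, ?_, ?_, ?_, ?_⟩
  · intro j n hn
    simp only [Finset.mem_image] at hn
    obtain ⟨i, _, rfl⟩ := hn
    exact hgmem i
  · intro j
    rw [Finset.card_image_of_injective _ hginj]
    calc (F j).card ≤ (Finset.Ico (j*s) (j*s+s)).card := by
          refine Finset.card_le_card_of_injOn (fun i => (i : ℕ)) ?_ ?_
          · intro i hi
            rw [Finset.mem_coe, Finset.mem_Ico]
            exact ⟨hFlb j i hi, hFub j i hi⟩
          · intro a _ b _ hab
            exact Fin.val_injective hab
      _ = s := by rw [Nat.card_Ico]; omega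
  · intro j k hjk
    rw [Finset.disjoint_left]
    intro n hn hk
    simp only [Finset.mem_image, hF, Finset.mem_filter] at hn hk
    obtain ⟨i, hi, rfl⟩ := hn
    obtain ⟨i', hi', hii⟩ := hk
    cases hginj hii
    exact hjk (hi.2 ▸ hi'.2 ▸ rfl)
  · intro α _ f
    have h1 : ∀ j, ∑ n ∈ (F j).image g, f n = ∑ i ∈ F j, f (g i) :=
      fun j => Finset.sum_image (fun a _ b _ hab => hginj hab)
    have h2 : ∑ j ∈ Finset.range (N+1), ∑ i ∈ F j, f (g i) = ∑ i : Fin M, f (g i) := by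
      apply Finset.sum_fiberwise_of_maps_to
      intro i _
      simp only [Finset.mem_range]
      have h3 : (i : ℕ)/s ≤ (i:ℕ) := Nat.div_le_self _ _
      have hiM : (i:ℕ) < M := i.2
      have hMN : M ≤ N := by
        rw [hM]; exact (Finset.card_le_univ Tc).trans (by simp)
      omega
    have h3 : ∑ i : Fin M, f (g i) = ∑ n ∈ Tc, f n := by
      rw [← hgimg]
      exact (Finset.sum_image (fun a _ b _ hab => hginj hab)).symm
    calc ∑ j ∈ Finset.range (N+1), ∑ n ∈ (F j).image g, f n
        = ∑ j ∈ Finset.range (N+1), ∑ i ∈ F j, f (g i) :=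
          Finset.sum_congr rfl fun j _ => h1 j
      _ = ∑ n ∈ Tc, f n := by rw [h2, h3]
  · intro j n hn
    simp only [Finset.mem_image] at hn
    obtain ⟨i, hi, rfl⟩ := hn
    have hival : j * s + s ≤ (i : ℕ) := by
      have h2 := hFlb (j+1) i hi
      calc j * s + s = (j+1) * s := by ring
        _ ≤ (i:ℕ) := h2
    have hdom : ∀ i' ∈ F j, ‖h (g i)‖ ≤ ‖h (g i')‖ := by
      intro i' hi'
      apply hmono
      have := hFub j i' hi'
      exact le_of_lt (by rw [Fin.lt_iff_val_lt_val]; omega)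
    have hcard : s ≤ (F j).card := by
      have hlt : ∀ t : Fin s, j * s + (t:ℕ) < M := by
        intro t
        have := i.2
        have := t.2
        omega
      refine le_trans ?_ (Finset.card_le_card_of_injOn (s := (Finset.univ : Finset (Fin s)))
        (fun t : Fin s => (⟨j * s + (t:ℕ), hlt t⟩ : Fin M)) ?_ ?_)
      · simp
      · intro t _
        rw [Finset.mem_coe]
        simp only [hF, Finset.mem_filter]
        refine ⟨Finset.mem_univ _, ?_⟩
        show (j * s + (t:ℕ)) / s = j
        rw [mul_comm, add_comm, Nat.add_mul_div_left _ _ hs, Nat.div_eq_of_lt t.2]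
        omega
      · intro a _ b _ hab
        simp only [Fin.mk.injEq] at hab
        exact Fin.val_injective (by omega)
    have hsum : ∑ n' ∈ (F j).image g, ‖h n'‖ = ∑ i' ∈ F j, ‖h (g i')‖ :=
      Finset.sum_image (fun a _ b _ hab => hginj hab)
    show (s:ℝ) * ‖h (g i)‖ ≤ ∑ n' ∈ (F j).image g, ‖h n'‖
    rw [hsum]
    calc (s:ℝ) * ‖h (g i)‖ ≤ ((F j).card : ℝ) * ‖h (g i)‖ := by
          apply mul_le_mul_of_nonneg_right _ (norm_nonneg _)
          exact_mod_cast hcard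
      _ ≤ ∑ i' ∈ F j, ‖h (g i')‖ := by
          have := Finset.card_nsmul_le_sum (F j) (fun i' => ‖h (g i')‖) ‖h (g i)‖ hdom
          simpa [nsmul_eq_mul] using this
end BPStability

open BPStability

set_option maxHeartbeats 2000000 in
/-- Theorem (Candès): if `δ_{2s} < √2 - 1`, then there are constants `C₀, C₁ > 0`
depending only on `δ_{2s}` (in particular, independent of `X`) such that any Basis
Pursuit solution `X̃` for data `Y = A X + E`, `‖E‖₂ ≤ ε`, satisfies
`‖X̃ - X‖₂ ≤ C₀ s^{-1/2} ‖X_s - X‖₁ + C₁ ε` and `‖X̃ - X‖₁ ≤ C₀ ‖X_s - X‖₁ + C₁ ε`. -/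
theorem basis_pursuit_stability (m N s : ℕ) (hs : 0 < s)
    (A : Matrix (Fin m) (Fin N) ℂ)
    (hA : ric A (2 * s) < Real.sqrt 2 - 1) :
    ∃ C₀ C₁ : ℝ, 0 < C₀ ∧ 0 < C₁ ∧
      ∀ (X Xs : Fin N → ℂ) (E : Fin m → ℂ) (ε : ℝ) (Xt : Fin N → ℂ),
        l2norm E ≤ ε →
        IsBestApprox s X Xs →
        IsBPSol A (A.mulVec X + E) ε Xt →
        l2norm (Xt - X) ≤ C₀ / Real.sqrt s * l1norm (Xs - X) + C₁ * ε ∧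
          l1norm (Xt - X) ≤ C₀ * l1norm (Xs - X) + C₁ * ε := by
  classical
  obtain ⟨hδ0, hRIP⟩ := ric_spec A (2*s)
  set δ := ric A (2*s) with hδdef
  have hsqrt2 : (Real.sqrt 2)^2 = 2 := Real.sq_sqrt (by norm_num)
  set κ := 1 - δ - Real.sqrt 2 * δ with hκ
  have hκpos : 0 < κ := by
    nlinarith [hsqrt2, Real.sqrt_nonneg 2, hA, hδ0]
  have hδ1 : δ < 1 := by nlinarith [hsqrt2, Real.sqrt_nonneg 2, hA]
  have h1δpos : (0:ℝ) < Real.sqrt (1+δ) := Real.sqrt_pos.mpr (by linarith)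
  have hspos : (0:ℝ) < Real.sqrt s := Real.sqrt_pos.mpr (by exact_mod_cast hs)
  refine ⟨4*Real.sqrt 2*δ/κ + 2, (4*Real.sqrt (1+δ)/κ) * (1 + Real.sqrt s), ?_, ?_, ?_⟩
  · positivity
  · positivity
  intro X Xs E ε Xt hE hBA hBP
  obtain ⟨T₀, hTcard, hXs, -⟩ := hBA
  set h : Fin N → ℂ := Xt - X with hh
  have hε0 : 0 ≤ ε := le_trans (l2norm_nonneg' E) hE
  set e₀ := l1norm (Xs - X) with he₀
  have he₀nn : 0 ≤ e₀ := l1norm_nonneg' _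
  have he₀eq : e₀ = ∑ n ∈ T₀ᶜ, ‖X n‖ := by
    rw [he₀, l1norm, ← Finset.sum_add_sum_compl T₀]
    have h1 : ∑ n ∈ T₀, ‖(Xs - X) n‖ = 0 := Finset.sum_eq_zero fun n hn => by
      simp [hXs n, hn]
    have h2 : ∑ n ∈ T₀ᶜ, ‖(Xs - X) n‖ = ∑ n ∈ T₀ᶜ, ‖X n‖ :=
      Finset.sum_congr rfl fun n hn => by
        simp [hXs n, Finset.mem_compl.mp hn]
    rw [h1, h2, zero_add]
  have hYX : (A.mulVec X + E) - A.mulVec X = E := by abel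
  have hl1min : l1norm Xt ≤ l1norm X := hBP.2 X (by rw [hYX]; exact hE)
  have htube : l2norm (A.mulVec h) ≤ 2 * ε := by
    have h1 := hBP.1
    have hAh : A.mulVec h = E - ((A.mulVec X + E) - A.mulVec Xt) := by
      rw [hh, Matrix.mulVec_sub]; abel
    rw [hAh, l2norm_eq, toE_sub]
    calc ‖toE E - toE ((A.mulVec X + E) - A.mulVec Xt)‖
        ≤ ‖toE E‖ + ‖toE ((A.mulVec X + E) - A.mulVec Xt)‖ := norm_sub_le _ _
      _ ≤ ε + ε := add_le_add (by rw [← l2norm_eq]; exact hE) (by rw [← l2norm_eq]; exact h1)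
      _ = 2 * ε := by ring
  have hcone : ∑ n ∈ T₀ᶜ, ‖h n‖ ≤ ∑ n ∈ T₀, ‖h n‖ + 2 * e₀ := by
    have hXtn : ∀ n, Xt n = X n + h n := fun n => by simp [hh]
    have hT : ∑ n ∈ T₀, ‖X n‖ - ∑ n ∈ T₀, ‖h n‖ ≤ ∑ n ∈ T₀, ‖Xt n‖ := by
      rw [← Finset.sum_sub_distrib]
      apply Finset.sum_le_sum
      intro n _
      rw [hXtn n]
      have h2 : ‖X n + h n - h n‖ ≤ ‖X n + h n‖ + ‖h n‖ := norm_sub_le _ _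
      have h3 : ‖X n‖ ≤ ‖X n + h n‖ + ‖h n‖ := by simpa using h2
      linarith
    have hTc2 : ∑ n ∈ T₀ᶜ, ‖h n‖ - ∑ n ∈ T₀ᶜ, ‖X n‖ ≤ ∑ n ∈ T₀ᶜ, ‖Xt n‖ := by
      rw [← Finset.sum_sub_distrib]
      apply Finset.sum_le_sum
      intro n _
      rw [hXtn n]
      have h2 : ‖X n + h n - X n‖ ≤ ‖X n + h n‖ + ‖X n‖ := norm_sub_le _ _
      have h3 : ‖h n‖ ≤ ‖X n + h n‖ + ‖X n‖ := by simpa using h2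
      linarith
    have hs1 : ∑ n ∈ T₀, ‖Xt n‖ + ∑ n ∈ T₀ᶜ, ‖Xt n‖ = l1norm Xt :=
      Finset.sum_add_sum_compl T₀ _
    have hs2 : ∑ n ∈ T₀, ‖X n‖ + ∑ n ∈ T₀ᶜ, ‖X n‖ = l1norm X :=
      Finset.sum_add_sum_compl T₀ _
    rw [he₀eq]
    linarith [hl1min]
  obtain ⟨C, hCsub, hCcard, hCdisj, hCpart, hCdom⟩ := exists_blocks hs h T₀
  set hT0 : Fin N → ℂ := rst T₀ h with hhT0
  set hB : ℕ → (Fin N → ℂ) := fun j => rst (C j) h with hhB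
  set h01 : Fin N → ℂ := rst (T₀ ∪ C 0) h with hh01
  have hd0 : Disjoint T₀ (C 0) := by
    rw [Finset.disjoint_right]
    intro n hn0 hnT
    exact (Finset.mem_compl.mp (hCsub 0 hn0)) hnT
  -- decomposition
  have hTcdec : rst T₀ᶜ h = ∑ j ∈ Finset.range (N+1), hB j := by
    funext n
    rw [Finset.sum_apply]
    have hpart := hCpart ℂ (fun x => if x = n then h n else 0)
    have hS : ∀ S : Finset (Fin N), ∑ i ∈ S, (if i = n then h n else 0) = if n ∈ S then h n else 0 :=
      fun S => Finset.sum_ite_eq' S n (fun _ => h n)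
    calc (rst T₀ᶜ h) n = if n ∈ T₀ᶜ then h n else 0 := rfl
      _ = ∑ i ∈ T₀ᶜ, (if i = n then h n else 0) := (hS _).symm
      _ = ∑ j ∈ Finset.range (N+1), ∑ i ∈ C j, (if i = n then h n else 0) := hpart.symm
      _ = ∑ j ∈ Finset.range (N+1), (hB j) n := by
          refine Finset.sum_congr rfl fun j _ => ?_
          rw [hS]; rfl
  have hdecomp0 : h = hT0 + rst T₀ᶜ h := by
    funext n
    by_cases hn : n ∈ T₀ <;>
      simp [hhT0, rst, hn, Finset.mem_compl]
  have h01eq : h01 = hT0 + hB 0 := by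
    funext n
    by_cases h1 : n ∈ T₀ <;> by_cases h2 : n ∈ C 0
    · exact absurd h2 (Finset.disjoint_left.mp hd0 h1)
    all_goals simp [hh01, hhT0, hhB, rst, h1, h2]
  have hdecomp : h = h01 + ∑ j ∈ Finset.range N, hB (j+1) := by
    rw [h01eq]
    conv_lhs => rw [hdecomp0, hTcdec, Finset.sum_range_succ']
    abel
  -- basic norm quantities
  set aT0 := l2norm hT0 with haT0
  set aB0 := l2norm (hB 0) with haB0
  set a01 := l2norm h01 with ha01
  set Ssum := ∑ j ∈ Finset.range N, l2norm (hB (j+1)) with hSsum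
  have hsp01 : Sparse (2*s) h01 := by
    apply rst_sparse
    calc (T₀ ∪ C 0).card ≤ T₀.card + (C 0).card := Finset.card_union_le _ _
      _ ≤ s + s := add_le_add (le_of_eq hTcard) (hCcard 0)
      _ = 2 * s := by ring
  have hspT0 : Sparse s hT0 := rst_sparse (le_of_eq hTcard) h
  have hspB : ∀ j, Sparse s (hB j) := fun j => rst_sparse (hCcard j) h
  have hdisjT0B : ∀ j, ∀ n, hT0 n = 0 ∨ hB (j+1) n = 0 := by
    intro j n
    by_cases hn : n ∈ T₀
    · right
      have : n ∉ C (j+1) := fun hc => (Finset.mem_compl.mp (hCsub (j+1) hc)) hn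
      simp [hhB, rst, this]
    · left; simp [hhT0, rst, hn]
  have hdisjB0B : ∀ j, ∀ n, hB 0 n = 0 ∨ hB (j+1) n = 0 := by
    intro j n
    by_cases hn : n ∈ C 0
    · right
      have : n ∉ C (j+1) := Finset.disjoint_left.mp (hCdisj 0 (j+1) (by omega)) hn
      simp [hhB, rst, this]
    · left; simp [hhB, rst, hn]
  -- block chain bounds
  have hblock : ∀ j, l2norm (hB (j+1)) ≤ (∑ n ∈ C j, ‖h n‖) / Real.sqrt s := by
    intro j
    have hσnn : (0:ℝ) ≤ ∑ n ∈ C j, ‖h n‖ := Finset.sum_nonneg fun _ _ => norm_nonneg _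
    rcases Finset.eq_empty_or_nonempty (C (j+1)) with hemp | hne
    · have hz : hB (j+1) = 0 := funext fun n => by simp [hhB, rst, hemp]
      rw [hz]
      have : l2norm (0 : Fin N → ℂ) = 0 := by simp [l2norm]
      rw [this]
      exact div_nonneg hσnn (Real.sqrt_nonneg _)
    · have hsq : l2norm (hB (j+1))^2 ≤ (∑ n ∈ C j, ‖h n‖)^2 / s := by
        have hBeq : hB (j+1) = rst (C (j+1)) h := rfl
        rw [hBeq, sq_l2norm_rst]
        have hcd : ∀ n ∈ C (j+1), ‖h n‖^2 ≤ ((∑ n' ∈ C j, ‖h n'‖)/s)^2 := by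
          intro n hn
          have h1 := hCdom j n hn
          have h2 : ‖h n‖ ≤ (∑ n' ∈ C j, ‖h n'‖) / s := by
            rw [le_div_iff₀ (show (0:ℝ) < s by exact_mod_cast hs)]
            linarith
          exact pow_le_pow_left₀ (norm_nonneg _) h2 2
        calc ∑ n ∈ C (j+1), ‖h n‖^2 ≤ ∑ _n ∈ C (j+1), ((∑ n' ∈ C j, ‖h n'‖)/s)^2 :=
              Finset.sum_le_sum hcd
          _ = (C (j+1)).card * ((∑ n' ∈ C j, ‖h n'‖)/s)^2 := by
              rw [Finset.sum_const, nsmul_eq_mul]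
          _ ≤ s * ((∑ n' ∈ C j, ‖h n'‖)/s)^2 := by
              apply mul_le_mul_of_nonneg_right _ (by positivity)
              exact_mod_cast hCcard (j+1)
          _ = (∑ n' ∈ C j, ‖h n'‖)^2 / s := by
              field_simp
      calc l2norm (hB (j+1)) = Real.sqrt (l2norm (hB (j+1))^2) :=
            (Real.sqrt_sq (l2norm_nonneg' _)).symm
        _ ≤ Real.sqrt ((∑ n ∈ C j, ‖h n‖)^2 / s) := Real.sqrt_le_sqrt hsq
        _ = (∑ n ∈ C j, ‖h n‖) / Real.sqrt s := by
            rw [Real.sqrt_div (sq_nonneg _), Real.sqrt_sq hσnn]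
  have hl1T0 : ∑ n ∈ T₀, ‖h n‖ ≤ Real.sqrt s * aT0 := by
    have h1 := l1_rst_le T₀ h
    rw [l1norm_rst, hTcard] at h1
    exact h1
  have haT0a01 : aT0 ≤ a01 := by
    have hsub : ∑ n ∈ T₀, ‖h n‖^2 ≤ ∑ n ∈ T₀ ∪ C 0, ‖h n‖^2 :=
      Finset.sum_le_sum_of_subset_of_nonneg Finset.subset_union_left
        (fun _ _ _ => sq_nonneg _)
    calc aT0 = Real.sqrt (aT0^2) := (Real.sqrt_sq (l2norm_nonneg' _)).symm
      _ = Real.sqrt (∑ n ∈ T₀, ‖h n‖^2) := by rw [haT0, hhT0, sq_l2norm_rst]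
      _ ≤ Real.sqrt (∑ n ∈ T₀ ∪ C 0, ‖h n‖^2) := Real.sqrt_le_sqrt hsub
      _ = Real.sqrt (a01^2) := by rw [ha01, hh01, sq_l2norm_rst]
      _ = a01 := Real.sqrt_sq (l2norm_nonneg' _)
  have hSsumle : Ssum ≤ a01 + 2 * e₀ / Real.sqrt s := by
    have h1 : Ssum ≤ (∑ j ∈ Finset.range N, ∑ n ∈ C j, ‖h n‖) / Real.sqrt s := by
      rw [Finset.sum_div]
      exact Finset.sum_le_sum fun j _ => hblock j
    have h2 : ∑ j ∈ Finset.range N, ∑ n ∈ C j, ‖h n‖ ≤ ∑ n ∈ T₀ᶜ, ‖h n‖ := by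
      rw [← hCpart ℝ (fun n => ‖h n‖)]
      apply Finset.sum_le_sum_of_subset_of_nonneg (Finset.range_subset_range.mpr (show N ≤ N+1 by omega))
      intro j _ _
      exact Finset.sum_nonneg fun n _ => norm_nonneg _
    calc Ssum ≤ (∑ j ∈ Finset.range N, ∑ n ∈ C j, ‖h n‖) / Real.sqrt s := h1
      _ ≤ (Real.sqrt s * aT0 + 2 * e₀) / Real.sqrt s := by
          have hnum : ∑ j ∈ Finset.range N, ∑ n ∈ C j, ‖h n‖ ≤ Real.sqrt s * aT0 + 2*e₀ := by
            linarith [h2, hcone, hl1T0]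
          gcongr
      _ = aT0 + 2 * e₀ / Real.sqrt s := by
          rw [add_div, mul_div_cancel_left₀ _ (ne_of_gt hspos)]
      _ ≤ a01 + 2 * e₀ / Real.sqrt s := by linarith [haT0a01]
  -- RIP bounds on h01
  have hRIPlo : (1 - δ) * a01^2 ≤ l2norm (A.mulVec h01)^2 := (hRIP h01 hsp01).1
  have hRIPup : l2norm (A.mulVec h01) ≤ Real.sqrt (1+δ) * a01 := by
    have := (hRIP h01 hsp01).2
    have h2 := Real.sqrt_le_sqrt this
    rw [Real.sqrt_mul (by linarith) (a01^2), Real.sqrt_sq (l2norm_nonneg' _),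
      Real.sqrt_sq (l2norm_nonneg' _)] at h2
    exact h2
  -- inner product estimate
  have hSsumnn : 0 ≤ Ssum := Finset.sum_nonneg fun j _ => l2norm_nonneg' _
  have haT0B0 : aT0 + aB0 ≤ Real.sqrt 2 * a01 := by
    have hBeq : hB 0 = rst (C 0) h := rfl
    have hsqsum : aT0^2 + aB0^2 = a01^2 := by
      rw [haT0, haB0, ha01, hhT0, hh01, hBeq, sq_l2norm_rst, sq_l2norm_rst, sq_l2norm_rst,
        Finset.sum_union hd0]
    by_contra hcon
    push_neg at hcon
    have h1 : 0 ≤ aT0 := l2norm_nonneg' _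
    have h2 : 0 ≤ aB0 := l2norm_nonneg' _
    have h3 : 0 ≤ a01 := l2norm_nonneg' _
    nlinarith [sq_nonneg (aT0 - aB0), hsqrt2, mul_nonneg (Real.sqrt_nonneg 2) h3]
  have hmain : (1-δ) * a01^2 ≤ Real.sqrt (1+δ) * a01 * (2*ε) + Real.sqrt 2 * δ * a01 * Ssum := by
    have hAdec : A.mulVec h = A.mulVec h01 + ∑ j ∈ Finset.range N, A.mulVec (hB (j+1)) := by
      conv_lhs => rw [hdecomp]
      rw [Matrix.mulVec_add]
      congr 1
      rw [← Matrix.mulVecLin_apply, map_sum]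
      exact Finset.sum_congr rfl fun j _ => Matrix.mulVecLin_apply _ _
    have hinner1 : (inner ℂ (toE (A.mulVec h01)) (toE (A.mulVec h)) : ℂ)
        = inner ℂ (toE (A.mulVec h01)) (toE (A.mulVec h01))
          + ∑ j ∈ Finset.range N, inner ℂ (toE (A.mulVec h01)) (toE (A.mulVec (hB (j+1)))) := by
      rw [hAdec, toE_add, toE_sum, inner_add_right, inner_sum]
    have hre1 : ((inner ℂ (toE (A.mulVec h01)) (toE (A.mulVec h)) : ℂ)).re
        = l2norm (A.mulVec h01)^2
          + ∑ j ∈ Finset.range N,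
              ((inner ℂ (toE (A.mulVec h01)) (toE (A.mulVec (hB (j+1)))) : ℂ)).re := by
      rw [hinner1, Complex.add_re, Complex.re_sum]
      congr 1
      rw [l2norm_eq]
      exact (InnerProductSpace.norm_sq_eq_re_inner (𝕜 := ℂ) _).symm
    have hsplitA : A.mulVec h01 = A.mulVec hT0 + A.mulVec (hB 0) := by
      rw [h01eq, Matrix.mulVec_add]
    have hperj : ∀ j ∈ Finset.range N,
        -((inner ℂ (toE (A.mulVec h01)) (toE (A.mulVec (hB (j+1)))) : ℂ)).re
          ≤ δ * (aT0 + aB0) * l2norm (hB (j+1)) := by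
      intro j _
      have hz : (inner ℂ (toE (A.mulVec h01)) (toE (A.mulVec (hB (j+1)))) : ℂ)
          = inner ℂ (toE (A.mulVec hT0)) (toE (A.mulVec (hB (j+1))))
            + inner ℂ (toE (A.mulVec (hB 0))) (toE (A.mulVec (hB (j+1)))) := by
        rw [hsplitA, toE_add, inner_add_left]
      have hb1 := ro_norm hδ0 hRIP hspT0 (hspB (j+1)) (hdisjT0B j)
      have hb2 := ro_norm hδ0 hRIP (hspB 0) (hspB (j+1)) (hdisjB0B j)
      rw [hz, Complex.add_re]
      have e1 : -((inner ℂ (toE (A.mulVec hT0)) (toE (A.mulVec (hB (j+1)))) : ℂ)).re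
          ≤ ‖(inner ℂ (toE (A.mulVec hT0)) (toE (A.mulVec (hB (j+1)))) : ℂ)‖ :=
        (neg_le_abs _).trans (Complex.abs_re_le_norm _)
      have e2 : -((inner ℂ (toE (A.mulVec (hB 0))) (toE (A.mulVec (hB (j+1)))) : ℂ)).re
          ≤ ‖(inner ℂ (toE (A.mulVec (hB 0))) (toE (A.mulVec (hB (j+1)))) : ℂ)‖ :=
        (neg_le_abs _).trans (Complex.abs_re_le_norm _)
      have hring : δ*(aT0+aB0)*l2norm (hB (j+1))
          = δ*aT0*l2norm (hB (j+1)) + δ*aB0*l2norm (hB (j+1)) := by ring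
      linarith [e1, e2, hb1, hb2]
    have hsum2 : ∑ j ∈ Finset.range N,
        -((inner ℂ (toE (A.mulVec h01)) (toE (A.mulVec (hB (j+1)))) : ℂ)).re
          ≤ δ * (aT0 + aB0) * Ssum := by
      calc ∑ j ∈ Finset.range N,
            -((inner ℂ (toE (A.mulVec h01)) (toE (A.mulVec (hB (j+1)))) : ℂ)).re
          ≤ ∑ j ∈ Finset.range N, δ*(aT0+aB0)*l2norm (hB (j+1)) := Finset.sum_le_sum hperj
        _ = δ * (aT0 + aB0) * Ssum := by rw [hSsum, Finset.mul_sum]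
    have htop : ((inner ℂ (toE (A.mulVec h01)) (toE (A.mulVec h)) : ℂ)).re
        ≤ l2norm (A.mulVec h01) * (2*ε) := by
      have h1 : ((inner ℂ (toE (A.mulVec h01)) (toE (A.mulVec h)) : ℂ)).re
          ≤ ‖(inner ℂ (toE (A.mulVec h01)) (toE (A.mulVec h)) : ℂ)‖ := Complex.re_le_norm _
      have h2 := norm_inner_le_norm (𝕜 := ℂ) (toE (A.mulVec h01)) (toE (A.mulVec h))
      rw [← l2norm_eq, ← l2norm_eq] at h2
      have h3 : l2norm (A.mulVec h01) * l2norm (A.mulVec h) ≤ l2norm (A.mulVec h01) * (2*ε) :=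
        mul_le_mul_of_nonneg_left htube (l2norm_nonneg' _)
      linarith
    have hneg : ∑ j ∈ Finset.range N,
        -((inner ℂ (toE (A.mulVec h01)) (toE (A.mulVec (hB (j+1)))) : ℂ)).re
        = -(∑ j ∈ Finset.range N,
            ((inner ℂ (toE (A.mulVec h01)) (toE (A.mulVec (hB (j+1)))) : ℂ)).re) := by
      rw [Finset.sum_neg_distrib]
    have hx2 : l2norm (A.mulVec h01)^2 ≤ l2norm (A.mulVec h01)*(2*ε) + δ*(aT0+aB0)*Ssum := by
      linarith [hre1, htop, hsum2, hneg]
    have hchain : (1-δ)*a01^2 ≤ l2norm (A.mulVec h01)*(2*ε) + δ*(aT0+aB0)*Ssum :=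
      le_trans hRIPlo hx2
    have hstep1 : l2norm (A.mulVec h01)*(2*ε) ≤ Real.sqrt (1+δ)*a01*(2*ε) :=
      mul_le_mul_of_nonneg_right hRIPup (by linarith)
    have hstep2 : δ*(aT0+aB0)*Ssum ≤ Real.sqrt 2*δ*a01*Ssum := by
      calc δ*(aT0+aB0)*Ssum ≤ δ*(Real.sqrt 2*a01)*Ssum :=
            mul_le_mul_of_nonneg_right (mul_le_mul_of_nonneg_left haT0B0 hδ0) hSsumnn
        _ = Real.sqrt 2*δ*a01*Ssum := by ring
    linarith [hchain, hstep1, hstep2]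
  -- solve for a01
  clear_value δ κ h e₀ hT0 hB h01 aT0 aB0 a01 Ssum
  set W := 2 * Real.sqrt (1+δ) * ε + 2 * Real.sqrt 2 * δ * e₀ / Real.sqrt s with hW
  clear_value W
  have hWnn : 0 ≤ W := by
    rw [hW]
    have h1 : (0:ℝ) ≤ 2*Real.sqrt (1+δ)*ε :=
      mul_nonneg (mul_nonneg (by norm_num) (Real.sqrt_nonneg _)) hε0
    have h2 : (0:ℝ) ≤ 2*Real.sqrt 2*δ*e₀/Real.sqrt s :=
      div_nonneg
        (mul_nonneg (mul_nonneg (mul_nonneg (by norm_num) (Real.sqrt_nonneg 2)) hδ0) he₀nn)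
        (Real.sqrt_nonneg _)
    linarith
  have hκne : κ ≠ 0 := ne_of_gt hκpos
  have hsne : Real.sqrt (s:ℝ) ≠ 0 := ne_of_gt hspos
  have ha01W : a01 ≤ W / κ := by
    rcases eq_or_lt_of_le (l2norm_nonneg' h01) with hz | hpos
    · rw [ha01, ← hz]
      exact div_nonneg hWnn hκpos.le
    · rw [← ha01] at hpos
      have ha01nn : 0 ≤ a01 := by rw [ha01]; exact l2norm_nonneg' h01
      have hstep : Real.sqrt 2 * δ * a01 * Ssum
          ≤ Real.sqrt 2 * δ * a01 * (a01 + 2*e₀/Real.sqrt s) := by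
        apply mul_le_mul_of_nonneg_left hSsumle
        exact mul_nonneg (mul_nonneg (Real.sqrt_nonneg 2) hδ0) ha01nn
      have hq : κ * a01 * a01 ≤ W * a01 := by
        rw [hκ, hW]
        have hexp : Real.sqrt 2 * δ * a01 * (a01 + 2*e₀/Real.sqrt s)
            = Real.sqrt 2*δ*a01*a01 + 2*Real.sqrt 2*δ*a01*e₀/Real.sqrt s := by ring
        have hexp2 : (2*Real.sqrt (1+δ)*ε + 2*Real.sqrt 2*δ*e₀/Real.sqrt s)*a01
            = Real.sqrt (1+δ)*a01*(2*ε) + 2*Real.sqrt 2*δ*a01*e₀/Real.sqrt s := by ring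
        have hexp3 : (1-δ-Real.sqrt 2*δ)*a01*a01
            = (1-δ)*a01^2 - Real.sqrt 2*δ*a01*a01 := by ring
        linarith [hmain, hstep, hexp, hexp2, hexp3]
      have h7 : κ * a01 ≤ W := le_of_mul_le_mul_right hq hpos
      rw [le_div_iff₀ hκpos]
      have h8 : a01 * κ = κ * a01 := mul_comm _ _
      linarith
  -- conclusions
  constructor
  · have hfin : l2norm h ≤ a01 + Ssum := by
      conv_lhs => rw [hdecomp]
      rw [l2norm_eq, toE_add, toE_sum]
      calc ‖toE h01 + ∑ j ∈ Finset.range N, toE (hB (j+1))‖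
          ≤ ‖toE h01‖ + ‖∑ j ∈ Finset.range N, toE (hB (j+1))‖ := norm_add_le _ _
        _ ≤ ‖toE h01‖ + ∑ j ∈ Finset.range N, ‖toE (hB (j+1))‖ :=
            add_le_add_right (norm_sum_le _ _) _
        _ = a01 + Ssum := by
            have e1 : ‖toE h01‖ = a01 := by rw [ha01, l2norm_eq]
            have e2 : ∑ j ∈ Finset.range N, ‖toE (hB (j+1))‖ = Ssum := by
              rw [hSsum]
              exact Finset.sum_congr rfl fun j _ => (l2norm_eq _).symm
            rw [e1, e2]
    have hb : l2norm h ≤ 2*(W/κ) + 2*e₀/Real.sqrt s := by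
      linarith only [hfin, hSsumle, ha01W]
    refine hb.trans ?_
    have hEQ : 2*(W/κ) + 2*e₀/Real.sqrt s
        = (4*Real.sqrt 2*δ/κ + 2)/Real.sqrt s*e₀ + (4*Real.sqrt (1+δ)/κ)*ε := by
      rw [hW]
      field_simp
      ring
    rw [hEQ]
    have hc1 : (0:ℝ) ≤ 4*Real.sqrt (1+δ)/κ :=
      div_nonneg (by positivity) hκpos.le
    have hLE : (4*Real.sqrt (1+δ)/κ)*ε ≤ (4*Real.sqrt (1+δ)/κ)*(1+Real.sqrt s)*ε := by
      nlinarith only [mul_nonneg (mul_nonneg hc1 hε0) (Real.sqrt_nonneg (s:ℝ)), hc1, hε0]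
    linarith only [hLE]
  · have hl1 : l1norm h = ∑ n ∈ T₀, ‖h n‖ + ∑ n ∈ T₀ᶜ, ‖h n‖ :=
      (Finset.sum_add_sum_compl T₀ _).symm
    have h5 : Real.sqrt s * aT0 ≤ Real.sqrt s * a01 :=
      mul_le_mul_of_nonneg_left haT0a01 (Real.sqrt_nonneg _)
    have hb : l1norm h ≤ 2*(Real.sqrt s * a01) + 2*e₀ := by
      linarith only [hl1, hcone, hl1T0, h5]
    have hb2 : Real.sqrt s * a01 ≤ Real.sqrt s * (W/κ) :=
      mul_le_mul_of_nonneg_left ha01W (Real.sqrt_nonneg _)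
    have hEQ : 2*(Real.sqrt s*(W/κ)) + 2*e₀
        = (4*Real.sqrt 2*δ/κ + 2)*e₀ + (4*Real.sqrt (1+δ)/κ)*Real.sqrt s*ε := by
      rw [hW]
      field_simp
      ring
    have hc1 : (0:ℝ) ≤ 4*Real.sqrt (1+δ)/κ :=
      div_nonneg (by positivity) hκpos.le
    have hLE : (4*Real.sqrt (1+δ)/κ)*Real.sqrt s*ε
        ≤ (4*Real.sqrt (1+δ)/κ)*(1+Real.sqrt s)*ε := by
      nlinarith only [mul_nonneg hc1 hε0, hc1, hε0]
    linarith only [hb, hb2, hEQ, hLE]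
end
end

section
/- Let k > 0, θ ∈ (0,π), a ∈ ℝ, and let u : ℝ × (a, ∞) → ℂ be a twice continuously differentiable solution of the Helmholtz equation ∂²u/∂x² + ∂²u/∂z² + k² u = 0 that is (2π, k cos θ)-quasi-periodic, i.e. u(x + 2π, z) = e^{2π i k cos θ} u(x, z) for all (x, z). For n ∈ ℤ and α_n = n/k + cos θ, define the Fourier coefficient u_n(z) = (1/2π) ∫_{−π}^{π} u(x, z) e^{−i k α_n x} dx. Then each u_n is twice differentiable on (a, ∞) and satisfies ü_n(z) + k²(1 − α_n²) u_n(z) = 0. -/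
open Complex Real Set intervalIntegral

noncomputable section

private lemma key_deriv (a : ℝ) (c : ℂ) (v vz : ℝ → ℝ → ℂ)
    (hdv : ∀ x z, a < z → HasDerivAt (fun t => v x t) (vz x z) z)
    (hcvz : ContinuousOn (fun q : ℝ × ℝ => vz q.1 q.2) (Set.univ ×ˢ Set.Ioi a))
    (hsv : ∀ z, a < z → Continuous (fun x => v x z))
    (hsvz : ∀ z, a < z → Continuous (fun x => vz x z))
    {z : ℝ} (hz : a < z) :
    HasDerivAt (fun t => ∫ x in (-Real.pi)..Real.pi, v x t * Complex.exp (-(c * x)))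
      (∫ x in (-Real.pi)..Real.pi, vz x z * Complex.exp (-(c * x))) z := by
  have hce : Continuous fun x : ℝ => Complex.exp (-(c * x)) := by fun_prop
  set ε : ℝ := (z - a) / 2 with hε
  have hε0 : 0 < ε := by rw [hε]; linarith
  have hball : ∀ t ∈ Metric.ball z ε, a < t := by
    intro t ht
    rw [Metric.mem_ball, Real.dist_eq, abs_lt] at ht
    have := ht.1
    rw [hε] at this
    linarith
  have hK : IsCompact ((Set.Icc (-Real.pi) Real.pi) ×ˢ Set.Icc (z - ε) (z + ε)) :=
    isCompact_Icc.prod isCompact_Icc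
  have hsub : (Set.Icc (-Real.pi) Real.pi) ×ˢ Set.Icc (z - ε) (z + ε) ⊆
      Set.univ ×ˢ Set.Ioi a := by
    rintro ⟨x, t⟩ ⟨hx, ht⟩
    refine ⟨trivial, ?_⟩
    have h1 := ht.1
    simp only [Set.mem_Ioi]
    rw [hε] at h1
    linarith
  have hcont : ContinuousOn (fun q : ℝ × ℝ => vz q.1 q.2 * Complex.exp (-(c * q.1)))
      ((Set.Icc (-Real.pi) Real.pi) ×ˢ Set.Icc (z - ε) (z + ε)) :=
    (hcvz.mono hsub).mul (hce.comp continuous_fst).continuousOn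
  obtain ⟨M, hM⟩ := hK.exists_bound_of_continuousOn hcont
  have hIoc : Set.uIoc (-Real.pi) Real.pi ⊆ Set.Icc (-Real.pi) Real.pi := by
    rw [Set.uIoc_of_le (by linarith [Real.pi_pos])]
    exact Set.Ioc_subset_Icc_self
  have main := intervalIntegral.hasDerivAt_integral_of_dominated_loc_of_deriv_le
    (F := fun t x => v x t * Complex.exp (-(c * x)))
    (F' := fun t x => vz x t * Complex.exp (-(c * x)))
    (bound := fun _ => M) (μ := MeasureTheory.volume) (a := -Real.pi) (b := Real.pi)
    (x₀ := z) (Metric.ball_mem_nhds z hε0)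
    (Filter.eventually_of_mem (Ioi_mem_nhds hz) fun t ht =>
      ((hsv t ht).mul hce).aestronglyMeasurable.restrict)
    (((hsv z hz).mul hce).intervalIntegrable _ _)
    (((hsvz z hz).mul hce).aestronglyMeasurable.restrict)
    (Filter.Eventually.of_forall fun x hx t ht => by
      refine hM (x, t) ⟨hIoc hx, ?_⟩
      rw [Metric.mem_ball, Real.dist_eq, abs_lt] at ht
      constructor <;> simp only [] <;> [linarith [ht.1]; linarith [ht.2]])
    intervalIntegrable_const
    (Filter.Eventually.of_forall fun x hx t ht => (hdv x t (hball t ht)).mul_const _)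
  exact main.2

/-- For a twice continuously differentiable `(2π, k cos θ)`-quasi-periodic solution `u`
of the Helmholtz equation `u_xx + u_zz + k² u = 0` on `ℝ × (a, ∞)`, each Fourier
coefficient `u_n(z) = (1/2π) ∫_{-π}^{π} u(x, z) e^{-i k α_n x} dx`, `α_n = n/k + cos θ`,
is twice differentiable in `z` and satisfies `ü_n + k²(1 - α_n²) u_n = 0`. -/
theorem fourier_coefficient_mode_equation (k θ a : ℝ) (hk : 0 < k)
    (hθ1 : 0 < θ) (hθ2 : θ < Real.pi)
    (u ux uxx uz uzz : ℝ → ℝ → ℂ)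
    (hux : ∀ x z, a < z → HasDerivAt (fun t => u t z) (ux x z) x)
    (huxx : ∀ x z, a < z → HasDerivAt (fun t => ux t z) (uxx x z) x)
    (huz : ∀ x z, a < z → HasDerivAt (fun t => u x t) (uz x z) z)
    (huzz : ∀ x z, a < z → HasDerivAt (fun t => uz x t) (uzz x z) z)
    (hcu : ContinuousOn (fun q : ℝ × ℝ => u q.1 q.2) (Set.univ ×ˢ Set.Ioi a))
    (hcux : ContinuousOn (fun q : ℝ × ℝ => ux q.1 q.2) (Set.univ ×ˢ Set.Ioi a))
    (hcuxx : ContinuousOn (fun q : ℝ × ℝ => uxx q.1 q.2) (Set.univ ×ˢ Set.Ioi a))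
    (hcuz : ContinuousOn (fun q : ℝ × ℝ => uz q.1 q.2) (Set.univ ×ˢ Set.Ioi a))
    (hcuzz : ContinuousOn (fun q : ℝ × ℝ => uzz q.1 q.2) (Set.univ ×ˢ Set.Ioi a))
    (hHelm : ∀ x z, a < z → uxx x z + uzz x z + (k : ℂ) ^ 2 * u x z = 0)
    (hquasi : ∀ x z, a < z →
      u (x + 2 * Real.pi) z = Complex.exp (2 * Real.pi * Complex.I * k * Real.cos θ) * u x z) :
    ∀ n : ℤ, ∃ d : ℝ → ℂ,
      ∀ z, a < z →
        HasDerivAt (fun t => (1 / (2 * Real.pi) : ℂ) *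
            ∫ x in (-Real.pi)..Real.pi,
              u x t * Complex.exp (-(Complex.I * k * (((n : ℝ) / k + Real.cos θ : ℝ) : ℂ) * x)))
          (d z) z ∧
        HasDerivAt d
          (-((k : ℂ) ^ 2 * (1 - (((n : ℝ) / k + Real.cos θ : ℝ) : ℂ) ^ 2)) *
            ((1 / (2 * Real.pi) : ℂ) *
              ∫ x in (-Real.pi)..Real.pi,
                u x z * Complex.exp (-(Complex.I * k * (((n : ℝ) / k + Real.cos θ : ℝ) : ℂ) * x))))
          z := by
  intro n
  have hkn : (k : ℂ) ≠ 0 := Complex.ofReal_ne_zero.mpr hk.ne'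
  set α : ℝ := (n : ℝ) / k + Real.cos θ with hα
  set c : ℂ := Complex.I * k * (α : ℂ) with hc
  -- slices are continuous
  have slice : ∀ v : ℝ → ℝ → ℂ,
      ContinuousOn (fun q : ℝ × ℝ => v q.1 q.2) (Set.univ ×ˢ Set.Ioi a) →
      ∀ z, a < z → Continuous fun x => v x z := by
    intro v hv z hz
    have hmk : Continuous fun x : ℝ => ((x, z) : ℝ × ℝ) := by fun_prop
    exact hv.comp_continuous hmk fun x => by simp [hz]
  have hcE : Continuous fun x : ℝ => Complex.exp (-(c * x)) := by fun_prop
  -- derivative of the exponential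
  have hede : ∀ x : ℝ, HasDerivAt (fun y : ℝ => Complex.exp (-(c * y)))
      (-c * Complex.exp (-(c * x))) x := by
    intro x
    have h1 : HasDerivAt (fun y : ℝ => -(c * (y : ℂ))) (-c) x := by
      have h0 := ((Complex.ofRealCLM.hasDerivAt (x := x)).const_mul c).neg
      simp at h0
      exact h0
    have := h1.cexp
    convert this using 1
    ring
  -- the key exponential identity
  have hE : Complex.exp (2 * Real.pi * Complex.I * k * Real.cos θ) *
      Complex.exp (-(c * (Real.pi : ℂ))) = Complex.exp (-(c * ((-Real.pi : ℝ) : ℂ))) := by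
    rw [← Complex.exp_add, Complex.exp_eq_exp_iff_exists_int]
    refine ⟨-n, ?_⟩
    rw [hc, hα]
    push_cast
    field_simp
    ring
  -- quasi-periodicity of ux
  have hquasix : ∀ x z, a < z → ux (x + 2 * Real.pi) z =
      Complex.exp (2 * Real.pi * Complex.I * k * Real.cos θ) * ux x z := by
    intro x z hz
    have h2 : HasDerivAt (fun t : ℝ => t + 2 * Real.pi) 1 x := (hasDerivAt_id x).add_const _
    have h1 : HasDerivAt (fun t => u (t + 2 * Real.pi) z) (ux (x + 2 * Real.pi) z) x :=
      HasDerivAt.comp_add_const x _ (hux (x + 2 * Real.pi) z hz)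
    have h3 : HasDerivAt (fun t => Complex.exp (2 * Real.pi * Complex.I * k * Real.cos θ) * u t z)
        (Complex.exp (2 * Real.pi * Complex.I * k * Real.cos θ) * ux x z) x :=
      (hux x z hz).const_mul _
    have h4 : (fun t => u (t + 2 * Real.pi) z) =
        fun t => Complex.exp (2 * Real.pi * Complex.I * k * Real.cos θ) * u t z :=
      funext fun t => hquasi t z hz
    rw [h4] at h1
    exact h1.unique h3
  -- boundary terms vanish
  have bdry : ∀ v : ℝ → ℝ → ℂ,
      (∀ x z, a < z → v (x + 2 * Real.pi) z =
        Complex.exp (2 * Real.pi * Complex.I * k * Real.cos θ) * v x z) →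
      ∀ z, a < z →
        v Real.pi z * Complex.exp (-(c * (Real.pi : ℂ))) -
          v (-Real.pi) z * Complex.exp (-(c * ((-Real.pi : ℝ) : ℂ))) = 0 := by
    intro v hq z hz
    have h := hq (-Real.pi) z hz
    rw [show -Real.pi + 2 * Real.pi = Real.pi by ring] at h
    rw [h, ← hE]
    ring
  -- the mode equation for the second derivative
  have mode : ∀ z, a < z →
      (∫ x in (-Real.pi)..Real.pi, uzz x z * Complex.exp (-(c * x))) =
        -((k : ℂ) ^ 2 * (1 - (α : ℂ) ^ 2)) *
          ∫ x in (-Real.pi)..Real.pi, u x z * Complex.exp (-(c * x)) := by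
    intro z hz
    have iu : IntervalIntegrable (fun x => u x z * Complex.exp (-(c * x)))
        MeasureTheory.volume (-Real.pi) Real.pi :=
      ((slice u hcu z hz).mul hcE).intervalIntegrable _ _
    have iux : IntervalIntegrable (fun x => ux x z * Complex.exp (-(c * x)))
        MeasureTheory.volume (-Real.pi) Real.pi :=
      ((slice ux hcux z hz).mul hcE).intervalIntegrable _ _
    have iuxx : IntervalIntegrable (fun x => uxx x z * Complex.exp (-(c * x)))
        MeasureTheory.volume (-Real.pi) Real.pi :=
      ((slice uxx hcuxx z hz).mul hcE).intervalIntegrable _ _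
    have iuE : IntervalIntegrable (fun x => u x z * (-c * Complex.exp (-(c * x))))
        MeasureTheory.volume (-Real.pi) Real.pi :=
      ((slice u hcu z hz).mul (continuous_const.mul hcE)).intervalIntegrable _ _
    have iuxE : IntervalIntegrable (fun x => ux x z * (-c * Complex.exp (-(c * x))))
        MeasureTheory.volume (-Real.pi) Real.pi :=
      ((slice ux hcux z hz).mul (continuous_const.mul hcE)).intervalIntegrable _ _
    have iE' : IntervalIntegrable (fun x : ℝ => -c * Complex.exp (-(c * x)))
        MeasureTheory.volume (-Real.pi) Real.pi :=
      (continuous_const.mul hcE).intervalIntegrable _ _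
    have hmul : ∀ (w : ℝ → ℝ → ℂ),
        (∫ x in (-Real.pi)..Real.pi, w x z * (-c * Complex.exp (-(c * x)))) =
          -c * ∫ x in (-Real.pi)..Real.pi, w x z * Complex.exp (-(c * x)) := by
      intro w
      rw [← intervalIntegral.integral_const_mul]
      exact intervalIntegral.integral_congr fun x _ => by ring
    -- first integration by parts
    have p1 : (∫ x in (-Real.pi)..Real.pi,
          (ux x z * Complex.exp (-(c * x)) + u x z * (-c * Complex.exp (-(c * x))))) =
        u Real.pi z * Complex.exp (-(c * (Real.pi : ℂ))) -
          u (-Real.pi) z * Complex.exp (-(c * ((-Real.pi : ℝ) : ℂ))) :=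
      intervalIntegral.integral_deriv_mul_eq_sub (fun x _ => hux x z hz)
        (fun x _ => hede x) ((slice ux hcux z hz).intervalIntegrable _ _) iE'
    rw [bdry u hquasi z hz, intervalIntegral.integral_add iux iuE, hmul u] at p1
    have q1 : (∫ x in (-Real.pi)..Real.pi, ux x z * Complex.exp (-(c * x))) =
        c * ∫ x in (-Real.pi)..Real.pi, u x z * Complex.exp (-(c * x)) := by
      linear_combination p1
    -- second integration by parts
    have p2 : (∫ x in (-Real.pi)..Real.pi,
          (uxx x z * Complex.exp (-(c * x)) + ux x z * (-c * Complex.exp (-(c * x))))) =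
        ux Real.pi z * Complex.exp (-(c * (Real.pi : ℂ))) -
          ux (-Real.pi) z * Complex.exp (-(c * ((-Real.pi : ℝ) : ℂ))) :=
      intervalIntegral.integral_deriv_mul_eq_sub (fun x _ => huxx x z hz)
        (fun x _ => hede x) ((slice uxx hcuxx z hz).intervalIntegrable _ _) iE'
    rw [bdry ux hquasix z hz, intervalIntegral.integral_add iuxx iuxE, hmul ux] at p2
    have q2 : (∫ x in (-Real.pi)..Real.pi, uxx x z * Complex.exp (-(c * x))) =
        c * ∫ x in (-Real.pi)..Real.pi, ux x z * Complex.exp (-(c * x)) := by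
      linear_combination p2
    -- use Helmholtz
    have hzz : (fun x : ℝ => uzz x z * Complex.exp (-(c * x))) =
        fun x : ℝ => -(uxx x z * Complex.exp (-(c * x))) -
          (k : ℂ) ^ 2 * (u x z * Complex.exp (-(c * x))) := by
      funext x
      have h := hHelm x z hz
      linear_combination Complex.exp (-(c * x)) * h
    rw [hzz]
    have hsplit : (∫ x in (-Real.pi)..Real.pi,
          (-(uxx x z * Complex.exp (-(c * x))) -
            (k : ℂ) ^ 2 * (u x z * Complex.exp (-(c * x))))) =
        (∫ x in (-Real.pi)..Real.pi, -(uxx x z * Complex.exp (-(c * x)))) -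
          ∫ x in (-Real.pi)..Real.pi, (k : ℂ) ^ 2 * (u x z * Complex.exp (-(c * x))) :=
      intervalIntegral.integral_sub iuxx.neg (iu.const_mul _)
    rw [hsplit, intervalIntegral.integral_neg, intervalIntegral.integral_const_mul, q2, q1]
    rw [hc]
    linear_combination (-(k : ℂ) ^ 2 * ((α : ℝ) : ℂ) ^ 2 *
      (∫ x in (-Real.pi)..Real.pi, u x z * Complex.exp (-(c * x)))) * Complex.I_sq
  -- assemble
  refine ⟨fun t => (1 / (2 * Real.pi) : ℂ) *
    ∫ x in (-Real.pi)..Real.pi, uz x t * Complex.exp (-(c * x)), ?_⟩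
  intro z hz
  constructor
  · exact (key_deriv a c u uz huz hcuz (fun z hz => slice u hcu z hz)
      (fun z hz => slice uz hcuz z hz) hz).const_mul _
  · have h := (key_deriv a c uz uzz huzz hcuzz (fun z hz => slice uz hcuz z hz)
      (fun z hz => slice uzz hcuzz z hz) hz).const_mul ((1 / (2 * Real.pi) : ℂ))
    rw [mode z hz] at h
    convert h using 1
    · rfl
    ring
end
end
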